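/- Let k ≥ 1 and 0 ≤ n ≤ k+1. For any two size-n subsets S, S' of [0,k] there is a finite sequence S = S_0, S_1, …, S_m = S' of size-n subsets of [0,k] such that for each i, the subsets S_i and S_{i+1} are either equal or close. In other words, the graph whose vertices are the size-n subsets of [0,k] and whose edges join pairs of close subsets is connected. -/

import Mathlib

/-- Two finite sets of integers are *close* if there is a bijection `g : S → S'`
with `g i ∈ {i-1, i, i+1}` for every `i ∈ S`. -/
def IsClose (S S' : Finset ℤ) : Prop :=
  ∃ g : ℤ → ℤ, Set.BijOn g ↑S ↑S' ∧ ∀ i ∈ S, g i = i - 1 ∨ g i = i ∨ g i = i + 1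

/-!
Every size-`n` subset `S` of `[0,k]` is joined to the initial segment `[0,n-1]`: unless `S` is
that segment, some positive `x ∈ S` has `x - 1 ∉ S`, and replacing `x` by `x - 1` is a close step that
lowers `∑ S`. Closeness is symmetric, so any two subsets are joined through `[0,n-1]`.
-/

open Finset Relation

theorem Relation.ReflTransGen.exists_seq {α : Type*} {r : α → α → Prop} {a b : α}
    (h : ReflTransGen r a b) :
    ∃ (m : ℕ) (f : ℕ → α), f 0 = a ∧ f m = b ∧ ∀ i < m, r (f i) (f (i + 1)) := by
  induction h using Relation.ReflTransGen.head_induction_on with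
  | refl => exact ⟨0, fun _ => b, rfl, rfl, by simp⟩
  | head hac _ ih =>
    obtain ⟨m, f, rfl, rfl, hf⟩ := ih
    refine ⟨m + 1, fun | 0 => _ | i + 1 => f i, rfl, rfl, ?_⟩
    rintro (_ | i) hi
    · exact hac
    · exact hf i (by omega)

theorem Finset.image_swap_of_mem_of_notMem {α : Type*} [DecidableEq α] {S : Finset α} {x y : α}
    (hx : x ∈ S) (hy : y ∉ S) : S.image (Equiv.swap x y) = insert y (S.erase x) := by
  ext z
  simp only [mem_image, mem_insert, mem_erase]
  constructor
  · rintro ⟨w, hw, rfl⟩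
    rcases eq_or_ne w x with rfl | hwx
    · simp
    · have hwy : w ≠ y := fun h => hy (h ▸ hw)
      simp [Equiv.swap_apply_of_ne_of_ne hwx hwy, hwx, hw]
  · rintro (rfl | ⟨hzx, hz⟩)
    · exact ⟨x, hx, by simp⟩
    · have hzy : z ≠ y := fun h => hy (h ▸ hz)
      exact ⟨z, hz, Equiv.swap_apply_of_ne_of_ne hzx hzy⟩

theorem IsClose.symm {S S' : Finset ℤ} (h : IsClose S S') : IsClose S' S := by
  obtain ⟨g, hg, hmove⟩ := h
  refine ⟨Function.invFunOn g S, hg.symm hg.invOn_invFunOn.symm, fun j hj => ?_⟩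
  have hj' : j ∈ (S' : Set ℤ) := hj
  have hinv := hg.invOn_invFunOn.2 hj'
  rcases hmove _ (hg.surjOn.mapsTo_invFunOn hj') with h | h | h <;> omega

theorem isClose_insert_sub_one_erase {S : Finset ℤ} {x : ℤ} (hx : x ∈ S) (hx1 : x - 1 ∉ S) :
    IsClose S (insert (x - 1) (S.erase x)) := by
  refine ⟨Equiv.swap x (x - 1), ?_, fun i _ => ?_⟩
  · rw [← image_swap_of_mem_of_notMem hx hx1, coe_image]
    exact (Equiv.injective _).injOn.bijOn_image
  · rcases eq_or_ne i x with rfl | hix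
    · simp
    · rcases eq_or_ne i (x - 1) with rfl | hix1
      · simp
      · simp [Equiv.swap_apply_of_ne_of_ne hix hix1]

theorem eq_Icc_of_forall_sub_one_mem {S : Finset ℤ} (hS : ∀ x ∈ S, 0 ≤ x)
    (hdown : ∀ x ∈ S, 0 < x → x - 1 ∈ S) : S = Icc 0 ((#S : ℤ) - 1) := by
  have hIcc : ∀ y ∈ S, Icc 0 y ⊆ S := by
    intro y hy j hj
    rw [mem_Icc] at hj
    exact Int.leInductionDown (motive := fun j _ => 0 ≤ j → j ∈ S) (fun _ => hy)
      (fun i _ ih hi => hdown i (ih (by omega)) (by omega)) j hj.2 hj.1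
  have hsub : S ⊆ Icc 0 ((#S : ℤ) - 1) := by
    intro y hy
    have hcard := card_le_card (hIcc y hy)
    rw [Int.card_Icc] at hcard
    have := hS y hy
    rw [mem_Icc]
    omega
  exact eq_of_subset_of_card_le hsub (by rw [Int.card_Icc]; omega)

def CloseAdj (k : ℤ) (n : ℕ) (A B : Finset ℤ) : Prop :=
  A ∈ (Icc 0 k).powersetCard n ∧ B ∈ (Icc 0 k).powersetCard n ∧ IsClose A B

instance (k : ℤ) (n : ℕ) : Std.Symm (CloseAdj k n) where
  symm _ _ := fun ⟨hA, hB, h⟩ => ⟨hB, hA, h.symm⟩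

theorem reflTransGen_closeAdj_Icc {k : ℤ} {n : ℕ} {S : Finset ℤ}
    (hS : S ∈ (Icc 0 k).powersetCard n) :
    ReflTransGen (CloseAdj k n) S (Icc 0 ((n : ℤ) - 1)) := by
  rw [mem_powersetCard] at hS
  have hnonneg : ∀ x ∈ S, 0 ≤ x := fun x hx => (mem_Icc.1 (hS.1 hx)).1
  by_cases hdown : ∀ x ∈ S, 0 < x → x - 1 ∈ S
  · rw [← hS.2, ← eq_Icc_of_forall_sub_one_mem hnonneg hdown]
  push Not at hdown
  obtain ⟨x, hx, hxpos, hx1⟩ := hdown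
  have hx1' : x - 1 ∉ S.erase x := fun h => hx1 (mem_of_mem_erase h)
  have hT : insert (x - 1) (S.erase x) ∈ (Icc 0 k).powersetCard n := by
    refine mem_powersetCard.2 ⟨insert_subset ?_ ((erase_subset x S).trans hS.1), ?_⟩
    · have := mem_Icc.1 (hS.1 hx)
      exact mem_Icc.2 ⟨by omega, by omega⟩
    · rw [card_insert_of_notMem hx1', card_erase_of_mem hx, hS.2]
      have := card_pos.2 ⟨x, hx⟩
      omega
  have hsum : ∑ y ∈ insert (x - 1) (S.erase x), y = ∑ y ∈ S, y - 1 := by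
    rw [sum_insert hx1', sum_erase_eq_sub hx]
    ring
  have hx_le_sum : x ≤ ∑ y ∈ S, y := single_le_sum hnonneg hx
  exact .head ⟨mem_powersetCard.2 hS, hT, isClose_insert_sub_one_erase hx hx1⟩
    (reflTransGen_closeAdj_Icc hT)
termination_by (∑ y ∈ S, y).toNat
decreasing_by omega

theorem stmt_4 (k : ℤ) (n : ℕ)
    (S S' : Finset ℤ)
    (hS : S ⊆ Finset.Icc 0 k) (hS' : S' ⊆ Finset.Icc 0 k)
    (hcardS : S.card = n) (hcardS' : S'.card = n) :
    ∃ (m : ℕ) (f : ℕ → Finset ℤ),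
      f 0 = S ∧ f m = S' ∧
      (∀ i ≤ m, f i ⊆ Finset.Icc 0 k ∧ (f i).card = n) ∧
      (∀ i < m, f i = f (i + 1) ∨ IsClose (f i) (f (i + 1))) := by
  have hSS' : ReflTransGen (CloseAdj k n) S S' :=
    (reflTransGen_closeAdj_Icc (mem_powersetCard.2 ⟨hS, hcardS⟩)).trans
      (symm (reflTransGen_closeAdj_Icc (mem_powersetCard.2 ⟨hS', hcardS'⟩)))
  obtain ⟨m, f, hf0, hfm, hstep⟩ := hSS'.exists_seq
  refine ⟨m, f, hf0, hfm, fun i hi => ?_, fun i hi => Or.inr (hstep i hi).2.2⟩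
  rcases hi.lt_or_eq with hi | rfl
  · exact mem_powersetCard.1 (hstep i hi).1
  · exact hfm ▸ ⟨hS', hcardS'⟩
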